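/- arXiv:2306.03322 — 5 statements merged into one kernel-verified Lean document; each statement's English description precedes it below -/
import Mathlib

section
/- Let $F:\mathbb{R}^d\to\mathbb{R}$ be the average $F(x)=\frac1N\sum_{n=1}^N F_n(x)$ of $L_F$-smooth functions $F_n$, let $x_1,\dots,x_N\in\mathbb{R}^d$, $\bar{x}=\frac1N\sum_n x_n$, and let $\bar{m}\in\mathbb{R}^d$. Suppose $\alpha,\eta>0$ with $\alpha\eta L_F\le\tfrac12$ and $\bar{x}^+ = \bar{x} - \alpha\eta\bar{m}$. Then $F(\bar{x}^+) \le F(\bar{x}) - \frac{\alpha\eta}{2}\|\nabla F(\bar{x})\|^2 - \frac{\alpha\eta}{4}\|\bar{m}\|^2 + \alpha\eta\Big\|\bar{m} - \frac1N\sum_{n=1}^N \nabla F_n(x_n)\Big\|^2 + \alpha\eta L_F^2 \frac1N\sum_{n=1}^N\|x_n - \bar{x}\|^2$. -/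
/-!
Along the segment from `x` to `x + v`, an `L`-Lipschitz gradient makes
`t ↦ f (x + t v) - t ⟪∇f x, v⟫ - L t² ‖v‖² / 2` antitone on `[0, 1]` (the descent lemma);
averaging transfers the Lipschitz bound from the `Fₙ` to `F`. For the step `x̄ - αη m̄` the
linear term `-αη ⟪∇F x̄, m̄⟫` is split by polarization into
`-(αη/2)(‖∇F x̄‖² + ‖m̄‖² - ‖∇F x̄ - m̄‖²)`, the condition `αηL ≤ 1/2` absorbs the quadratic
term into `(αη/4)‖m̄‖²`, and `‖∇F x̄ - m̄‖²` is bounded through the intermediate point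
`(1/N)∑ₙ ∇Fₙ(xₙ)`, whose distance to `∇F x̄` is controlled by Jensen's inequality and the
smoothness of each `Fₙ`.
-/

open RealInnerProductSpace

section Gradient

variable {E : Type*} [NormedAddCommGroup E] [InnerProductSpace ℝ E] [CompleteSpace E]

theorem HasGradientAt.const_mul {f : E → ℝ} {f' x : E} (hf : HasGradientAt f f' x) (c : ℝ) :
    HasGradientAt (fun y => c * f y) (c • f') x := by
  rw [hasGradientAt_iff_hasFDerivAt, map_smul]
  exact hf.hasFDerivAt.const_mul c

theorem HasGradientAt.sum {ι : Type*} {s : Finset ι} {f : ι → E → ℝ} {f' : ι → E} {x : E}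
    (hf : ∀ i ∈ s, HasGradientAt (f i) (f' i) x) :
    HasGradientAt (fun y => ∑ i ∈ s, f i y) (∑ i ∈ s, f' i) x := by
  rw [hasGradientAt_iff_hasFDerivAt, map_sum]
  exact HasFDerivAt.fun_sum fun i hi => (hf i hi).hasFDerivAt

theorem hasDerivAt_apply_add_smul {f : E → ℝ} {x v : E} {t : ℝ}
    (hf : DifferentiableAt ℝ f (x + t • v)) :
    HasDerivAt (fun s : ℝ => f (x + s • v)) ⟪gradient f (x + t • v), v⟫ t := by
  have hline : HasDerivAt (fun s : ℝ => x + s • v) v t := by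
    simpa using ((hasDerivAt_id t).smul_const v).const_add x
  exact hf.hasGradientAt.hasFDerivAt.comp_hasDerivAt t hline

theorem inner_gradient_sub_le_of_norm_sub_le {f : E → ℝ} {L : ℝ}
    (hlip : ∀ a b, ‖gradient f a - gradient f b‖ ≤ L * ‖a - b‖) (x v : E) {t : ℝ} (ht : 0 ≤ t) :
    ⟪gradient f (x + t • v) - gradient f x, v⟫ ≤ L * t * ‖v‖ ^ 2 :=
  calc ⟪gradient f (x + t • v) - gradient f x, v⟫
      ≤ ‖gradient f (x + t • v) - gradient f x‖ * ‖v‖ := real_inner_le_norm _ _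
    _ ≤ L * ‖(x + t • v) - x‖ * ‖v‖ := by gcongr; exact hlip _ _
    _ = L * t * ‖v‖ ^ 2 := by
      rw [add_sub_cancel_left, norm_smul, Real.norm_of_nonneg ht]; ring

theorem le_add_inner_gradient_add_of_norm_sub_le {f : E → ℝ} {L : ℝ} (hf : Differentiable ℝ f)
    (hlip : ∀ a b, ‖gradient f a - gradient f b‖ ≤ L * ‖a - b‖) (x v : E) :
    f (x + v) ≤ f x + ⟪gradient f x, v⟫ + L / 2 * ‖v‖ ^ 2 := by
  set ψ : ℝ → ℝ := fun t => f (x + t • v) - t * ⟪gradient f x, v⟫ - L / 2 * t ^ 2 * ‖v‖ ^ 2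
  have hψ : ∀ t, HasDerivAt ψ (⟪gradient f (x + t • v) - gradient f x, v⟫ - L * t * ‖v‖ ^ 2) t := by
    intro t
    have h := ((hasDerivAt_apply_add_smul (x := x) (v := v) (hf _)).sub
      ((hasDerivAt_id t).mul_const ⟪gradient f x, v⟫)).sub
      (((hasDerivAt_pow 2 t).const_mul (L / 2)).mul_const (‖v‖ ^ 2))
    refine h.congr_deriv ?_
    rw [inner_sub_left]
    simp only [Nat.add_one_sub_one, pow_one, Nat.cast_ofNat]
    ring
  have hanti : AntitoneOn ψ (Set.Icc 0 1) :=
    antitoneOn_of_hasDerivWithinAt_nonpos (convex_Icc 0 1)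
      (fun t _ => (hψ t).continuousAt.continuousWithinAt) (fun t _ => (hψ t).hasDerivWithinAt)
      fun t ht => by
        rw [interior_Icc] at ht
        linarith [inner_gradient_sub_le_of_norm_sub_le hlip x v ht.1.le]
  have h01 := hanti (by simp) (by simp) zero_le_one
  simp only [ψ, zero_smul, add_zero, zero_mul, sub_zero, one_smul, one_mul, one_pow, ne_eq,
    OfNat.ofNat_ne_zero, not_false_eq_true, zero_pow, mul_zero] at h01
  linarith

theorem le_sub_inner_gradient_add_of_norm_sub_le {f : E → ℝ} {L : ℝ} (hf : Differentiable ℝ f)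
    (hlip : ∀ a b, ‖gradient f a - gradient f b‖ ≤ L * ‖a - b‖) (x m : E) (t : ℝ) :
    f (x - t • m) ≤ f x - t * ⟪gradient f x, m⟫ + L / 2 * t ^ 2 * ‖m‖ ^ 2 := by
  have h := le_add_inner_gradient_add_of_norm_sub_le hf hlip x (-(t • m))
  rwa [← sub_eq_add_neg, inner_neg_right, real_inner_smul_right, norm_neg, norm_smul,
    mul_pow, Real.norm_eq_abs, sq_abs, ← sub_eq_add_neg, ← mul_assoc] at h

end Gradient

section Average

variable {ι E F : Type*} [Fintype ι] [SeminormedAddCommGroup E] [SeminormedAddCommGroup F]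
  [NormedSpace ℝ F]

theorem norm_inv_card_smul_sum_le (w : ι → F) :
    ‖(Fintype.card ι : ℝ)⁻¹ • ∑ i, w i‖ ≤ (Fintype.card ι : ℝ)⁻¹ * ∑ i, ‖w i‖ := by
  rw [norm_smul, Real.norm_of_nonneg (by positivity)]
  gcongr
  exact norm_sum_le _ _

theorem norm_inv_card_smul_sum_sq_le (w : ι → F) :
    ‖(Fintype.card ι : ℝ)⁻¹ • ∑ i, w i‖ ^ 2 ≤ (Fintype.card ι : ℝ)⁻¹ * ∑ i, ‖w i‖ ^ 2 :=
  calc ‖(Fintype.card ι : ℝ)⁻¹ • ∑ i, w i‖ ^ 2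
      ≤ ((∑ i, ‖w i‖) / Fintype.card ι) ^ 2 := by
        rw [div_eq_inv_mul]; gcongr; exact norm_inv_card_smul_sum_le w
    _ ≤ (∑ i, ‖w i‖ ^ 2) / Fintype.card ι := sum_div_card_sq_le_sum_sq_div_card
    _ = (Fintype.card ι : ℝ)⁻¹ * ∑ i, ‖w i‖ ^ 2 := div_eq_inv_mul _ _

variable {g : ι → E → F} {L : ℝ}

theorem norm_inv_card_smul_sum_sub_le [Nonempty ι]
    (hg : ∀ i a b, ‖g i a - g i b‖ ≤ L * ‖a - b‖) (a b : E) :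
    ‖(Fintype.card ι : ℝ)⁻¹ • ∑ i, g i a - (Fintype.card ι : ℝ)⁻¹ • ∑ i, g i b‖ ≤ L * ‖a - b‖ :=
  calc _ ≤ (Fintype.card ι : ℝ)⁻¹ * ∑ i, ‖g i a - g i b‖ := by
        rw [← smul_sub, ← Finset.sum_sub_distrib]
        exact norm_inv_card_smul_sum_le _
    _ ≤ (Fintype.card ι : ℝ)⁻¹ * ∑ _i : ι, L * ‖a - b‖ := by gcongr with i; exact hg i a b
    _ = L * ‖a - b‖ := by
      rw [Finset.sum_const, Finset.card_univ, nsmul_eq_mul, inv_mul_cancel_left₀]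
      exact Nat.cast_ne_zero.mpr Fintype.card_ne_zero

theorem norm_inv_card_smul_sum_sub_sq_le (hg : ∀ i a b, ‖g i a - g i b‖ ≤ L * ‖a - b‖)
    (x : ι → E) (y : E) :
    ‖(Fintype.card ι : ℝ)⁻¹ • ∑ i, g i (x i) - (Fintype.card ι : ℝ)⁻¹ • ∑ i, g i y‖ ^ 2 ≤
      L ^ 2 * ((Fintype.card ι : ℝ)⁻¹ * ∑ i, ‖x i - y‖ ^ 2) :=
  calc _ ≤ (Fintype.card ι : ℝ)⁻¹ * ∑ i, ‖g i (x i) - g i y‖ ^ 2 := by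
        rw [← smul_sub, ← Finset.sum_sub_distrib]
        exact norm_inv_card_smul_sum_sq_le _
    _ ≤ (Fintype.card ι : ℝ)⁻¹ * ∑ i, L ^ 2 * ‖x i - y‖ ^ 2 := by
        gcongr with i
        rw [← mul_pow]
        exact pow_le_pow_left₀ (norm_nonneg _) (hg i (x i) y) 2
    _ = L ^ 2 * ((Fintype.card ι : ℝ)⁻¹ * ∑ i, ‖x i - y‖ ^ 2) := by
        rw [← Finset.mul_sum, mul_left_comm]

end Average

theorem neg_mul_inner_add_le {E : Type*} [NormedAddCommGroup E] [InnerProductSpace ℝ E]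
    (g m s : E) {t L D : ℝ} (ht : 0 ≤ t) (htL : t * L ≤ 1 / 2) (hD : ‖s - g‖ ^ 2 ≤ D) :
    -(t * ⟪g, m⟫) + L / 2 * t ^ 2 * ‖m‖ ^ 2 ≤
      -(t / 2 * ‖g‖ ^ 2) - t / 4 * ‖m‖ ^ 2 + t * ‖m - s‖ ^ 2 + t * D := by
  have hpolar : 2 * ⟪g, m⟫ = ‖g‖ ^ 2 + ‖m‖ ^ 2 - ‖g - m‖ ^ 2 := by
    rw [norm_sub_sq_real]; ring
  have hsplit : ‖g - m‖ ^ 2 ≤ 2 * ‖m - s‖ ^ 2 + 2 * ‖s - g‖ ^ 2 := by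
    have htri : ‖g - m‖ ≤ ‖m - s‖ + ‖s - g‖ := by
      rw [← norm_neg, neg_sub]; exact norm_sub_le_norm_sub_add_norm_sub m s g
    nlinarith [norm_nonneg (g - m), sq_nonneg (‖m - s‖ - ‖s - g‖)]
  have hquad : L / 2 * t ^ 2 * ‖m‖ ^ 2 ≤ t / 4 * ‖m‖ ^ 2 := by
    nlinarith [mul_le_mul_of_nonneg_left htL (mul_nonneg ht (sq_nonneg ‖m‖))]
  nlinarith [mul_le_mul_of_nonneg_left hsplit ht, mul_le_mul_of_nonneg_left hD ht]

theorem stmt9_general (dd N : ℕ) (hN : 0 < N)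
    (Fn : Fin N → EuclideanSpace ℝ (Fin dd) → ℝ) (LF : ℝ)
    (hdiff : ∀ n, Differentiable ℝ (Fn n))
    (hsmooth : ∀ n x y, ‖gradient (Fn n) x - gradient (Fn n) y‖ ≤ LF * ‖x - y‖)
    (F : EuclideanSpace ℝ (Fin dd) → ℝ)
    (hF : ∀ z, F z = (N : ℝ)⁻¹ * ∑ n, Fn n z)
    (α η : ℝ) (hα : 0 < α) (hη : 0 < η) (hstep : α * η * LF ≤ 1 / 2)
    (x : Fin N → EuclideanSpace ℝ (Fin dd)) (m : EuclideanSpace ℝ (Fin dd))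
    (xbar : EuclideanSpace ℝ (Fin dd)) :
    F (xbar - (α * η) • m) ≤
      F xbar - α * η / 2 * ‖gradient F xbar‖ ^ 2 - α * η / 4 * ‖m‖ ^ 2
        + α * η * ‖m - (N : ℝ)⁻¹ • ∑ n, gradient (Fn n) (x n)‖ ^ 2
        + α * η * LF ^ 2 * ((N : ℝ)⁻¹ * ∑ n, ‖x n - xbar‖ ^ 2) := by
  have hgradF : ∀ z, HasGradientAt F ((N : ℝ)⁻¹ • ∑ n, gradient (Fn n) z) z := fun z => by
    rw [show F = _ from funext hF]
    exact (HasGradientAt.sum fun n _ => (hdiff n z).hasGradientAt).const_mul _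
  have hF_diff : Differentiable ℝ F := fun z => (hgradF z).differentiableAt
  rw [gradient_eq hgradF]
  have : Nonempty (Fin N) := ⟨⟨0, hN⟩⟩
  have hlipF := norm_inv_card_smul_sum_sub_le hsmooth
  have hconsensus := norm_inv_card_smul_sum_sub_sq_le hsmooth x xbar
  simp only [Fintype.card_fin] at hlipF hconsensus
  have hdescent := le_sub_inner_gradient_add_of_norm_sub_le hF_diff
    (by rwa [gradient_eq hgradF]) xbar m (α * η)
  rw [gradient_eq hgradF] at hdescent
  have hstep_bound := neg_mul_inner_add_le _ m _ (mul_pos hα hη).le hstep hconsensus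
  linarith

/-- Descent inequality for the average objective `F = (1/N)∑ₙ Fₙ` at the
averaged iterate `x̄`, with direction `m̄` and consensus-error penalty:
`F(x̄⁺) ≤ F(x̄) − (αη/2)‖∇F(x̄)‖² − (αη/4)‖m̄‖² + αη‖m̄ − (1/N)∑ₙ∇Fₙ(xₙ)‖²
  + αη L_F² (1/N)∑ₙ‖xₙ − x̄‖²`. -/
theorem stmt9 (dd N : ℕ) (hN : 0 < N)
    (Fn : Fin N → EuclideanSpace ℝ (Fin dd) → ℝ) (LF : ℝ)
    (hdiff : ∀ n, Differentiable ℝ (Fn n))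
    (hsmooth : ∀ n x y, ‖gradient (Fn n) x - gradient (Fn n) y‖ ≤ LF * ‖x - y‖)
    (F : EuclideanSpace ℝ (Fin dd) → ℝ)
    (hF : ∀ z, F z = (N : ℝ)⁻¹ * ∑ n, Fn n z)
    (α η : ℝ) (hα : 0 < α) (hη : 0 < η) (hstep : α * η * LF ≤ 1 / 2)
    (x : Fin N → EuclideanSpace ℝ (Fin dd)) (m : EuclideanSpace ℝ (Fin dd))
    (xbar : EuclideanSpace ℝ (Fin dd)) (hxbar : xbar = (N : ℝ)⁻¹ • ∑ n, x n) :
    F (xbar - (α * η) • m) ≤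
      F xbar - α * η / 2 * ‖gradient F xbar‖ ^ 2 - α * η / 4 * ‖m‖ ^ 2
        + α * η * ‖m - (N : ℝ)⁻¹ • ∑ n, gradient (Fn n) (x n)‖ ^ 2
        + α * η * LF ^ 2 * ((N : ℝ)⁻¹ * ∑ n, ‖x n - xbar‖ ^ 2) :=
  stmt9_general dd N hN Fn LF hdiff hsmooth F hF α η hα hη hstep x m xbar
end

section
/- Let $f:\mathbb{R}^{d_0}\to\mathbb{R}^{d_1}$ be a deterministic function and for each time $t$ let $f(\cdot;\xi_t)$ be a random function with $\mathbb{E}_{\xi_t}[f(y;\xi_t)]=f(y)$, $\mathbb{E}\|f(y;\xi_t)-f(y)\|^2\le\delta^2$ for all $y$, and $\|f(y_1;\xi)-f(y_2;\xi)\|\le C\|y_1-y_2\|$ almost surely. Consider the STORM-like update $u_t = (1-\beta\eta)\big(u_{t-1} - f(w_{t-1};\xi_t)\big) + f(w_t;\xi_t)$ where $w_{t-1},w_t$ are $\xi_t$-measurable-in-the-past (i.e., independent of $\xi_t$), and $\beta\eta\in(0,1)$. Then $\mathbb{E}\|u_t - f(w_t)\|^2 \le (1-\beta\eta)\,\mathbb{E}\|u_{t-1}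 - f(w_{t-1})\|^2 + 2C^2\,\mathbb{E}\|w_t - w_{t-1}\|^2 + 2\beta^2\eta^2\delta^2$. -/
/-!
Fix the past. With `ρ = βη`, the new error splits as
`u_t - f(w_t) = (1 - ρ) (u_{t-1} - f(w_{t-1})) + M`, where
`M = [S(w_t) - S(w_{t-1}) - (f(w_t) - f(w_{t-1}))] + ρ [S(w_{t-1}) - f(w_{t-1})]`
has mean zero over the fresh sample. Hence the cross term vanishes and the second moment is
`(1 - ρ)² ‖u_{t-1} - f(w_{t-1})‖² + E‖M‖²`. The first bracket of `M` is a centred copy of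
`S(w_t) - S(w_{t-1})`, so its second moment is at most `C² ‖w_t - w_{t-1}‖²`, and the second
bracket has second moment at most `δ²`; `‖x + y‖² ≤ 2‖x‖² + 2‖y‖²` combines them. Integrating over
the past (Fubini) and using `(1 - ρ)² ≤ 1 - ρ` gives the claim.
-/

open MeasureTheory
open scoped RealInnerProductSpace

section SecondMoments

variable {Ω : Type*} [MeasurableSpace Ω] {μ : Measure Ω}

lemma integral_norm_add_sq_le {F : Type*} [NormedAddCommGroup F] {X Y : Ω → F}
    (hX : MemLp X 2 μ) (hY : MemLp Y 2 μ) :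
    ∫ ω, ‖X ω + Y ω‖ ^ 2 ∂μ ≤ 2 * ∫ ω, ‖X ω‖ ^ 2 ∂μ + 2 * ∫ ω, ‖Y ω‖ ^ 2 ∂μ := by
  have hX2 := (memLp_two_iff_integrable_sq_norm hX.1).1 hX
  have hY2 := (memLp_two_iff_integrable_sq_norm hY.1).1 hY
  rw [← integral_const_mul, ← integral_const_mul, ← integral_add (hX2.const_mul 2)
    (hY2.const_mul 2)]
  refine integral_mono_of_nonneg (.of_forall fun ω => by positivity)
    ((hX2.const_mul 2).add (hY2.const_mul 2)) (.of_forall fun ω => ?_)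
  calc ‖X ω + Y ω‖ ^ 2 ≤ (‖X ω‖ + ‖Y ω‖) ^ 2 := by gcongr; exact norm_add_le _ _
    _ ≤ 2 * ‖X ω‖ ^ 2 + 2 * ‖Y ω‖ ^ 2 := by linarith [add_sq_le (a := ‖X ω‖) (b := ‖Y ω‖)]

variable [IsProbabilityMeasure μ] {E : Type*} [NormedAddCommGroup E] [InnerProductSpace ℝ E]
  [CompleteSpace E]

lemma integral_norm_const_add_sq (a : E) {M : Ω → E} (hM : MemLp M 2 μ)
    (hM0 : ∫ ω, M ω ∂μ = 0) :
    ∫ ω, ‖a + M ω‖ ^ 2 ∂μ = ‖a‖ ^ 2 + ∫ ω, ‖M ω‖ ^ 2 ∂μ := by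
  have hM1 : Integrable M μ := hM.integrable one_le_two
  have hinner : Integrable (fun ω => 2 * ⟪a, M ω⟫) μ := (hM1.const_inner a).const_mul 2
  have hlin : Integrable (fun ω => ‖a‖ ^ 2 + 2 * ⟪a, M ω⟫) μ := (integrable_const _).add hinner
  simp_rw [norm_add_sq_real]
  rw [integral_add hlin ((memLp_two_iff_integrable_sq_norm hM.1).1 hM),
    integral_add (integrable_const _) hinner, integral_const_mul, integral_inner hM1, hM0]
  simp

lemma integral_norm_sub_integral_sq_le {X : Ω → E} (hX : MemLp X 2 μ) :
    ∫ ω, ‖X ω - ∫ ω', X ω' ∂μ‖ ^ 2 ∂μ ≤ ∫ ω, ‖X ω‖ ^ 2 ∂μ := by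
  have h0 : ∫ ω, (X ω - ∫ ω', X ω' ∂μ) ∂μ = 0 := by
    rw [integral_sub (hX.integrable one_le_two) (integrable_const _)]
    simp
  have h := integral_norm_const_add_sq (∫ ω', X ω' ∂μ) (hX.sub (memLp_const _)) h0
  simp only [Pi.sub_apply, add_sub_cancel] at h
  rw [h]
  exact le_add_of_nonneg_left (sq_nonneg _)

lemma integral_norm_const_add_add_smul_sq_le (a : E) (ρ : ℝ) {A B : Ω → E}
    (hA : MemLp A 2 μ) (hB : MemLp B 2 μ) (hA0 : ∫ ω, A ω ∂μ = 0) (hB0 : ∫ ω, B ω ∂μ = 0) :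
    ∫ ω, ‖a + (A ω + ρ • B ω)‖ ^ 2 ∂μ ≤
      ‖a‖ ^ 2 + 2 * ∫ ω, ‖A ω‖ ^ 2 ∂μ + 2 * ρ ^ 2 * ∫ ω, ‖B ω‖ ^ 2 ∂μ := by
  have hM0 : ∫ ω, (A ω + ρ • B ω) ∂μ = 0 := by
    rw [integral_add (g := fun ω => ρ • B ω) (hA.integrable one_le_two)
      ((hB.integrable one_le_two).smul ρ), integral_smul, hA0, hB0, smul_zero, add_zero]
  have hρB : ∫ ω, ‖ρ • B ω‖ ^ 2 ∂μ = ρ ^ 2 * ∫ ω, ‖B ω‖ ^ 2 ∂μ := by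
    simp_rw [norm_smul, mul_pow, Real.norm_eq_abs, sq_abs]
    exact integral_const_mul _ _
  rw [integral_norm_const_add_sq (M := fun ω => A ω + ρ • B ω) a (hA.add (hB.const_smul ρ)) hM0,
    mul_assoc, ← hρB]
  linarith [integral_norm_add_sq_le (Y := fun ω => ρ • B ω) hA (hB.const_smul ρ)]

lemma integral_norm_sq_storm_update_le {P Q : Ω → E} {p q u : E} {ρ : ℝ} (hρ : ρ ≠ 0)
    (hP : Integrable P μ) (hQ : Integrable Q μ) (hPp : ∫ ω, P ω ∂μ = p)
    (hQq : ∫ ω, Q ω ∂μ = q) (hQP : MemLp (Q - P) 2 μ)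
    (hint : Integrable (fun ω => ‖(1 - ρ) • (u - P ω) + Q ω - q‖ ^ 2) μ) :
    ∫ ω, ‖(1 - ρ) • (u - P ω) + Q ω - q‖ ^ 2 ∂μ ≤
      (1 - ρ) ^ 2 * ‖u - p‖ ^ 2 + 2 * ∫ ω, ‖Q ω - P ω‖ ^ 2 ∂μ
        + 2 * ρ ^ 2 * ∫ ω, ‖P ω - p‖ ^ 2 ∂μ := by
  set A : Ω → E := fun ω => (Q ω - P ω) - (q - p)
  set B : Ω → E := fun ω => P ω - p
  have hdecomp : ∀ ω, (1 - ρ) • (u - P ω) + Q ω - q = (1 - ρ) • (u - p) + (A ω + ρ • B ω) :=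
    fun ω => by simp only [A, B]; module
  have hmeas : AEStronglyMeasurable (fun ω => (1 - ρ) • (u - P ω) + Q ω - q) μ := by
    have := hP.1; have := hQ.1; fun_prop
  have hM : MemLp (fun ω => A ω + ρ • B ω) 2 μ := by
    have h := ((memLp_two_iff_integrable_sq_norm hmeas).2 hint).sub
      (memLp_const ((1 - ρ) • (u - p)))
    convert h using 1
    funext ω
    simp only [Pi.sub_apply, hdecomp, add_sub_cancel_left]
  have hA : MemLp A 2 μ := hQP.sub (memLp_const _)
  have hB : MemLp B 2 μ := by
    have h : B = ρ⁻¹ • ((fun ω => A ω + ρ • B ω) - A) := by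
      ext1 ω; simp [smul_smul, inv_mul_cancel₀ hρ]
    rw [h]
    exact (hM.sub hA).const_smul _
  have hQP_mean : ∫ ω, (Q ω - P ω) ∂μ = q - p := by
    rw [integral_sub hQ hP, hPp, hQq]
  have hA0 : ∫ ω, A ω ∂μ = 0 := by
    simp only [A]
    rw [integral_sub (f := fun ω => Q ω - P ω) (hQ.sub hP) (integrable_const _), hQP_mean,
      integral_const, probReal_univ, one_smul, sub_self]
  have hB0 : ∫ ω, B ω ∂μ = 0 := by
    simp only [B]
    rw [integral_sub hP (integrable_const _), hPp, integral_const, probReal_univ, one_smul,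
      sub_self]
  have hA_var : ∫ ω, ‖A ω‖ ^ 2 ∂μ ≤ ∫ ω, ‖Q ω - P ω‖ ^ 2 ∂μ := by
    have h := integral_norm_sub_integral_sq_le hQP
    simp only [Pi.sub_apply, hQP_mean] at h
    exact h
  have hnorm : ‖(1 - ρ) • (u - p)‖ ^ 2 = (1 - ρ) ^ 2 * ‖u - p‖ ^ 2 := by
    rw [norm_smul, mul_pow, Real.norm_eq_abs, sq_abs]
  simp_rw [hdecomp]
  linarith [integral_norm_const_add_add_smul_sq_le ((1 - ρ) • (u - p)) ρ hA hB hA0 hB0]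

lemma integral_norm_sq_storm_update_le_of_lipschitz {D : Type*} [SeminormedAddCommGroup D]
    {S : D → Ω → E} {f : D → E} {C δ ρ : ℝ} (hρ : ρ ≠ 0)
    (hSint : ∀ y, Integrable (S y) μ) (hunbiased : ∀ y, ∫ ω, S y ω ∂μ = f y)
    (hvar : ∀ y, ∫ ω, ‖S y ω - f y‖ ^ 2 ∂μ ≤ δ ^ 2)
    (hLip : ∀ᵐ ω ∂μ, ∀ y₁ y₂, ‖S y₁ ω - S y₂ ω‖ ≤ C * ‖y₁ - y₂‖) (u : E) (y' y : D)
    (hint : Integrable (fun ω => ‖(1 - ρ) • (u - S y' ω) + S y ω - f y‖ ^ 2) μ) :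
    ∫ ω, ‖(1 - ρ) • (u - S y' ω) + S y ω - f y‖ ^ 2 ∂μ ≤
      (1 - ρ) ^ 2 * ‖u - f y'‖ ^ 2 + 2 * C ^ 2 * ‖y - y'‖ ^ 2 + 2 * ρ ^ 2 * δ ^ 2 := by
  have hbound : ∀ᵐ ω ∂μ, ‖S y ω - S y' ω‖ ≤ C * ‖y - y'‖ := hLip.mono fun ω h => h y y'
  have hincr : ∫ ω, ‖S y ω - S y' ω‖ ^ 2 ∂μ ≤ C ^ 2 * ‖y - y'‖ ^ 2 := by
    rw [← mul_pow]
    calc ∫ ω, ‖S y ω - S y' ω‖ ^ 2 ∂μ ≤ ∫ _, (C * ‖y - y'‖) ^ 2 ∂μ :=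
          integral_mono_of_nonneg (.of_forall fun ω => by positivity) (integrable_const _)
            (hbound.mono fun ω h => pow_le_pow_left₀ (norm_nonneg _) h 2)
      _ = (C * ‖y - y'‖) ^ 2 := by simp
  have hstep := integral_norm_sq_storm_update_le hρ (hSint y') (hSint y)
    (hunbiased y') (hunbiased y) (MemLp.of_bound ((hSint y).1.sub (hSint y').1) _ hbound) hint
  linarith [mul_le_mul_of_nonneg_left (hvar y') (sq_nonneg ρ)]

end SecondMoments

/-- Independence of the past `(u_{t-1}, w_{t-1}, w_t)` from the fresh sample `ξ_t` is modelled by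
the product space `Ω₁ × Ω₂`. -/
theorem stmt10_general {Ω₁ Ω₂ : Type*} [MeasurableSpace Ω₁] [MeasurableSpace Ω₂]
    (μ₁ : Measure Ω₁) (μ₂ : Measure Ω₂)
    [IsProbabilityMeasure μ₁] [IsProbabilityMeasure μ₂]
    (d₀ d₁ : ℕ)
    (f : EuclideanSpace ℝ (Fin d₀) → EuclideanSpace ℝ (Fin d₁))
    (S : EuclideanSpace ℝ (Fin d₀) → Ω₂ → EuclideanSpace ℝ (Fin d₁))
    (C δ β η : ℝ) (hβη0 : 0 < β * η) (hβη1 : β * η < 1)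
    (hSint : ∀ y, Integrable (S y) μ₂)
    (hunbiased : ∀ y, ∫ ω₂, S y ω₂ ∂μ₂ = f y)
    (hvar : ∀ y, ∫ ω₂, ‖S y ω₂ - f y‖ ^ 2 ∂μ₂ ≤ δ ^ 2)
    (hLip : ∀ᵐ ω₂ ∂μ₂, ∀ y₁ y₂, ‖S y₁ ω₂ - S y₂ ω₂‖ ≤ C * ‖y₁ - y₂‖)
    (u' : Ω₁ → EuclideanSpace ℝ (Fin d₁))
    (w' w : Ω₁ → EuclideanSpace ℝ (Fin d₀))
    (hint1 : Integrable (fun ω₁ => ‖u' ω₁ - f (w' ω₁)‖ ^ 2) μ₁)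
    (hint2 : Integrable (fun ω₁ => ‖w ω₁ - w' ω₁‖ ^ 2) μ₁)
    (hint3 : Integrable
      (fun p : Ω₁ × Ω₂ =>
        ‖(1 - β * η) • (u' p.1 - S (w' p.1) p.2) + S (w p.1) p.2 - f (w p.1)‖ ^ 2)
      (μ₁.prod μ₂)) :
    ∫ p, ‖(1 - β * η) • (u' p.1 - S (w' p.1) p.2) + S (w p.1) p.2 - f (w p.1)‖ ^ 2
        ∂(μ₁.prod μ₂) ≤
      (1 - β * η) * ∫ ω₁, ‖u' ω₁ - f (w' ω₁)‖ ^ 2 ∂μ₁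
        + 2 * C ^ 2 * ∫ ω₁, ‖w ω₁ - w' ω₁‖ ^ 2 ∂μ₁
        + 2 * β ^ 2 * η ^ 2 * δ ^ 2 := by
  have hpast : Integrable (fun ω₁ => (1 - β * η) ^ 2 * ‖u' ω₁ - f (w' ω₁)‖ ^ 2
      + 2 * C ^ 2 * ‖w ω₁ - w' ω₁‖ ^ 2) μ₁ :=
    (hint1.const_mul _).add (hint2.const_mul _)
  have hcontract : (1 - β * η) ^ 2 ≤ 1 - β * η := by nlinarith
  have hmoment : 0 ≤ ∫ ω₁, ‖u' ω₁ - f (w' ω₁)‖ ^ 2 ∂μ₁ := integral_nonneg fun _ => by positivity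
  calc _ = ∫ ω₁, ∫ ω₂, ‖(1 - β * η) • (u' ω₁ - S (w' ω₁) ω₂) + S (w ω₁) ω₂ - f (w ω₁)‖ ^ 2
          ∂μ₂ ∂μ₁ := integral_prod _ hint3
    _ ≤ ∫ ω₁, ((1 - β * η) ^ 2 * ‖u' ω₁ - f (w' ω₁)‖ ^ 2 + 2 * C ^ 2 * ‖w ω₁ - w' ω₁‖ ^ 2
          + 2 * (β * η) ^ 2 * δ ^ 2) ∂μ₁ := by
        refine integral_mono_ae hint3.integral_prod_left (hpast.add (integrable_const _)) ?_
        filter_upwards [hint3.prod_right_ae] with ω₁ hω₁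
        exact integral_norm_sq_storm_update_le_of_lipschitz hβη0.ne' hSint hunbiased hvar hLip
          _ _ _ hω₁
    _ = (1 - β * η) ^ 2 * ∫ ω₁, ‖u' ω₁ - f (w' ω₁)‖ ^ 2 ∂μ₁
          + 2 * C ^ 2 * ∫ ω₁, ‖w ω₁ - w' ω₁‖ ^ 2 ∂μ₁ + 2 * (β * η) ^ 2 * δ ^ 2 := by
        rw [integral_add hpast (integrable_const _), integral_add (hint1.const_mul _)
          (hint2.const_mul _), integral_const_mul, integral_const_mul]
        simp
    _ ≤ _ := by linarith [mul_le_mul_of_nonneg_right hcontract hmoment]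

/-- One-step error contraction of the STORM-like inner-level estimator
`u_t = (1−βη)(u_{t−1} − f(w_{t−1};ξ_t)) + f(w_t;ξ_t)`.  Independence of `(u_{t−1}, w_{t−1}, w_t)`
from the fresh sample `ξ_t` is modelled by a product probability space `Ω₁ × Ω₂`, where the
past variables depend on `ω₁` and the sample on `ω₂`. -/
theorem stmt10 {Ω₁ Ω₂ : Type*} [MeasurableSpace Ω₁] [MeasurableSpace Ω₂]
    (μ₁ : Measure Ω₁) (μ₂ : Measure Ω₂)
    [IsProbabilityMeasure μ₁] [IsProbabilityMeasure μ₂]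
    (d₀ d₁ : ℕ)
    (f : EuclideanSpace ℝ (Fin d₀) → EuclideanSpace ℝ (Fin d₁))
    (S : EuclideanSpace ℝ (Fin d₀) → Ω₂ → EuclideanSpace ℝ (Fin d₁))
    (C δ β η : ℝ) (hβη0 : 0 < β * η) (hβη1 : β * η < 1)
    (hSmeas : Measurable (Function.uncurry S))
    (hSint : ∀ y, Integrable (S y) μ₂)
    (hunbiased : ∀ y, ∫ ω₂, S y ω₂ ∂μ₂ = f y)
    (hvar : ∀ y, ∫ ω₂, ‖S y ω₂ - f y‖ ^ 2 ∂μ₂ ≤ δ ^ 2)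
    (hLip : ∀ᵐ ω₂ ∂μ₂, ∀ y₁ y₂, ‖S y₁ ω₂ - S y₂ ω₂‖ ≤ C * ‖y₁ - y₂‖)
    (u' : Ω₁ → EuclideanSpace ℝ (Fin d₁))
    (w' w : Ω₁ → EuclideanSpace ℝ (Fin d₀))
    (hu' : Measurable u') (hw' : Measurable w') (hw : Measurable w)
    (hint1 : Integrable (fun ω₁ => ‖u' ω₁ - f (w' ω₁)‖ ^ 2) μ₁)
    (hint2 : Integrable (fun ω₁ => ‖w ω₁ - w' ω₁‖ ^ 2) μ₁)
    (hint3 : Integrable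
      (fun p : Ω₁ × Ω₂ =>
        ‖(1 - β * η) • (u' p.1 - S (w' p.1) p.2) + S (w p.1) p.2 - f (w p.1)‖ ^ 2)
      (μ₁.prod μ₂)) :
    ∫ p, ‖(1 - β * η) • (u' p.1 - S (w' p.1) p.2) + S (w p.1) p.2 - f (w p.1)‖ ^ 2
        ∂(μ₁.prod μ₂) ≤
      (1 - β * η) * ∫ ω₁, ‖u' ω₁ - f (w' ω₁)‖ ^ 2 ∂μ₁
        + 2 * C ^ 2 * ∫ ω₁, ‖w ω₁ - w' ω₁‖ ^ 2 ∂μ₁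
        + 2 * β ^ 2 * η ^ 2 * δ ^ 2 :=
  stmt10_general μ₁ μ₂ d₀ d₁ f S C δ β η hβη0 hβη1 hSint hunbiased hvar hLip u' w' w hint1 hint2
    hint3
end

section
/- Let $h_t,g_t\in\mathbb{R}^d$ be random vectors, $\mu\eta\in(0,1)$, and define the momentum sequence $m_t = (1-\mu\eta)m_{t-1} + \mu\eta\, g_t$. Suppose $\mathbb{E}[g_t\mid\mathcal{F}_{t}] = h_t$ where $h_t$ is $\mathcal{F}_t$-measurable, $m_{t-1}$ is $\mathcal{F}_t$-measurable, and $\mathbb{E}\|g_t - h_t\|^2 \le \sigma^2$. Then for any $\mathcal{F}_t$-measurable target $G_t$ and $G_{t-1}$ with $\mathbb{E}\|G_t - G_{t-1}\|^2 \le \Delta^2$: $\mathbb{E}\|m_t - G_t\|^2 \le (1-\mu\eta)\,\mathbb{E}\|m_{t-1}-G_{t-1}\|^2 + \frac{2}{\mu\eta}\mathbb{E}\|G_t - G_{t-1}\|^2 + 2\mu\eta\,\mathbb{E}\|h_t - G_t\|^2 + \mu^2\eta^2\sigma^2$. -/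
/-!
With `c = μη`, the error splits as `m_t - G_t = A + c • (g_t - h_t)`, where
`A = (1 - c)(m_{t-1} - G_{t-1}) + (1 - c)(G_{t-1} - G_t) + c (h_t - G_t)` depends on `ω₁` only.
For fixed `ω₁` the noise `g_t - h_t` has mean zero in `ω₂`, so by Fubini the cross term vanishes and
`𝔼‖m_t - G_t‖² = 𝔼‖A‖² + c² 𝔼‖g_t - h_t‖²`. Young's inequality
`‖u + v‖² ≤ ‖u‖² / (1 - c) + ‖v‖² / c`, with `u` the first summand of `A`, followed by
`‖a + b‖² ≤ 2‖a‖² + 2‖b‖²` on the remaining two, bounds `𝔼‖A‖²`.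
-/

open MeasureTheory

lemma add_sq_le_div_add_div {c : ℝ} (hc₀ : 0 < c) (hc₁ : c < 1) (a b : ℝ) :
    (a + b) ^ 2 ≤ a ^ 2 / (1 - c) + b ^ 2 / c := by
  have hc' : 0 < 1 - c := sub_pos.2 hc₁
  rw [div_add_div _ _ hc'.ne' hc₀.ne', le_div_iff₀ (mul_pos hc' hc₀)]
  nlinarith [sq_nonneg (c * a - (1 - c) * b)]

lemma norm_add_sq_le_div_add_div {E : Type*} [SeminormedAddCommGroup E] {c : ℝ} (hc₀ : 0 < c)
    (hc₁ : c < 1) (u v : E) :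
    ‖u + v‖ ^ 2 ≤ ‖u‖ ^ 2 / (1 - c) + ‖v‖ ^ 2 / c :=
  (pow_le_pow_left₀ (norm_nonneg _) (norm_add_le u v) 2).trans
    (add_sq_le_div_add_div hc₀ hc₁ _ _)

lemma norm_momentum_error_sq_le {E : Type*} [SeminormedAddCommGroup E] [NormedSpace ℝ E] {c : ℝ}
    (hc₀ : 0 < c) (hc₁ : c < 1) (x y z : E) :
    ‖(1 - c) • x + ((1 - c) • y + c • z)‖ ^ 2 ≤
      (1 - c) * ‖x‖ ^ 2 + 2 / c * ‖y‖ ^ 2 + 2 * c * ‖z‖ ^ 2 := by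
  have hc' : 0 < 1 - c := sub_pos.2 hc₁
  have hyz : ‖(1 - c) • y + c • z‖ ^ 2 ≤ 2 * ((1 - c) ^ 2 * ‖y‖ ^ 2 + c ^ 2 * ‖z‖ ^ 2) := by
    calc ‖(1 - c) • y + c • z‖ ^ 2 ≤ ((1 - c) * ‖y‖ + c * ‖z‖) ^ 2 := by
          gcongr
          simpa [norm_smul, abs_of_pos hc', abs_of_pos hc₀] using norm_add_le ((1 - c) • y) (c • z)
      _ ≤ _ := by simpa [mul_pow] using add_sq_le (a := (1 - c) * ‖y‖) (b := c * ‖z‖)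
  calc _ ≤ ‖(1 - c) • x‖ ^ 2 / (1 - c) + ‖(1 - c) • y + c • z‖ ^ 2 / c :=
        norm_add_sq_le_div_add_div hc₀ hc₁ _ _
    _ ≤ (1 - c) * ‖x‖ ^ 2 + 2 * ((1 - c) ^ 2 * ‖y‖ ^ 2 + c ^ 2 * ‖z‖ ^ 2) / c := by
        rw [norm_smul, Real.norm_of_nonneg hc'.le]
        gcongr
        rw [mul_pow, sq, mul_assoc, mul_div_cancel_left₀ _ hc'.ne']
    _ ≤ _ := by
        have hsq : (1 - c) ^ 2 ≤ 1 := by nlinarith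
        have hexp : 2 * ((1 - c) ^ 2 * ‖y‖ ^ 2 + c ^ 2 * ‖z‖ ^ 2) / c =
            2 * (1 - c) ^ 2 / c * ‖y‖ ^ 2 + 2 * c * ‖z‖ ^ 2 := by
          field_simp
        rw [hexp, add_assoc]
        gcongr
        linarith

lemma integral_norm_momentum_error_sq_le {Ω E : Type*} [MeasurableSpace Ω] {μ : Measure Ω}
    [NormedAddCommGroup E] [NormedSpace ℝ E] {c : ℝ} (hc₀ : 0 < c) (hc₁ : c < 1)
    {x y z : Ω → E} (hx : MemLp x 2 μ) (hy : MemLp y 2 μ) (hz : MemLp z 2 μ) :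
    ∫ ω, ‖(1 - c) • x ω + ((1 - c) • y ω + c • z ω)‖ ^ 2 ∂μ ≤
      (1 - c) * ∫ ω, ‖x ω‖ ^ 2 ∂μ + 2 / c * ∫ ω, ‖y ω‖ ^ 2 ∂μ + 2 * c * ∫ ω, ‖z ω‖ ^ 2 ∂μ := by
  have hsq {f : Ω → E} (hf : MemLp f 2 μ) : Integrable (fun ω => ‖f ω‖ ^ 2) μ :=
    (memLp_two_iff_integrable_sq_norm hf.1).1 hf
  have hx2 := (hsq hx).const_mul (1 - c)
  have hy2 := (hsq hy).const_mul (2 / c)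
  have hz2 := (hsq hz).const_mul (2 * c)
  calc _ ≤ ∫ ω, ((1 - c) * ‖x ω‖ ^ 2 + 2 / c * ‖y ω‖ ^ 2 + 2 * c * ‖z ω‖ ^ 2) ∂μ :=
        integral_mono (hsq ((hx.const_smul _).add ((hy.const_smul _).add (hz.const_smul _))))
          ((hx2.add hy2).add hz2) fun ω => norm_momentum_error_sq_le hc₀ hc₁ _ _ _
    _ = _ := by
        rw [integral_add ?_ hz2, integral_add hx2 hy2, integral_const_mul, integral_const_mul,
          integral_const_mul]
        exact hx2.add hy2

lemma MeasureTheory.MemLp.integrable_inner {α 𝕜 E : Type*} [RCLike 𝕜] [NormedAddCommGroup E]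
    [InnerProductSpace 𝕜 E] {m : MeasurableSpace α} {μ : Measure α} {f g : α → E}
    (hf : MemLp f 2 μ) (hg : MemLp g 2 μ) : Integrable (fun x => inner 𝕜 (f x) (g x)) μ := by
  refine (integrable_congr ?_).mp (L2.integrable_inner (𝕜 := 𝕜) hf.toLp hg.toLp)
  filter_upwards [hf.coeFn_toLp, hg.coeFn_toLp] with x hfx hgx
  rw [hfx, hgx]

section Product

variable {Ω₁ Ω₂ E : Type*} [MeasurableSpace Ω₁] [MeasurableSpace Ω₂]
  [NormedAddCommGroup E] [InnerProductSpace ℝ E] [CompleteSpace E]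
  {P₁ : Measure Ω₁} {P₂ : Measure Ω₂}

lemma integral_inner_fst_eq_zero [SFinite P₁] [SFinite P₂] (A : Ω₁ → E) {w : Ω₁ × Ω₂ → E}
    (hw : Integrable w (P₁.prod P₂))
    (hAw : Integrable (fun p => inner ℝ (A p.1) (w p)) (P₁.prod P₂))
    (hmean : ∀ᵐ x ∂P₁, ∫ y, w (x, y) ∂P₂ = 0) :
    ∫ p, inner ℝ (A p.1) (w p) ∂(P₁.prod P₂) = 0 := by
  rw [integral_prod _ hAw]
  refine integral_eq_zero_of_ae ?_
  filter_upwards [hw.prod_right_ae, hmean] with x hwx hx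
  rw [integral_inner hwx, hx, inner_zero_right, Pi.zero_apply]

lemma integral_norm_add_smul_sq_eq [IsFiniteMeasure P₁] [IsProbabilityMeasure P₂]
    {A : Ω₁ → E} {w : Ω₁ × Ω₂ → E} (hA : MemLp A 2 P₁) (hw : MemLp w 2 (P₁.prod P₂))
    (hmean : ∀ᵐ x ∂P₁, ∫ y, w (x, y) ∂P₂ = 0) (c : ℝ) :
    ∫ p, ‖A p.1 + c • w p‖ ^ 2 ∂(P₁.prod P₂) =
      ∫ x, ‖A x‖ ^ 2 ∂P₁ + c ^ 2 * ∫ p, ‖w p‖ ^ 2 ∂(P₁.prod P₂) := by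
  have hA' : MemLp (fun p : Ω₁ × Ω₂ => A p.1) 2 (P₁.prod P₂) := hA.comp_fst P₂
  have hA2 := (memLp_two_iff_integrable_sq_norm hA'.1).1 hA'
  have hw2 := (memLp_two_iff_integrable_sq_norm hw.1).1 hw
  have hAw := hA'.integrable_inner (𝕜 := ℝ) hw
  have hcross := integral_inner_fst_eq_zero A (hw.integrable one_le_two) hAw hmean
  calc ∫ p, ‖A p.1 + c • w p‖ ^ 2 ∂(P₁.prod P₂)
      = ∫ p, (‖A p.1‖ ^ 2 + 2 * c * inner ℝ (A p.1) (w p) + c ^ 2 * ‖w p‖ ^ 2) ∂(P₁.prod P₂) := by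
        congr 1 with p
        rw [norm_add_sq_real, real_inner_smul_right, norm_smul, mul_pow, Real.norm_eq_abs, sq_abs]
        ring
    _ = _ := by
        rw [integral_add ?_ (hw2.const_mul _), integral_add hA2 (hAw.const_mul _),
          integral_const_mul, integral_const_mul, hcross, integral_fun_fst (fun x => ‖A x‖ ^ 2)]
        · simp
        · exact hA2.add (hAw.const_mul _)

lemma ae_integral_sub_eq_zero [SFinite P₁] [IsProbabilityMeasure P₂] {g : Ω₁ × Ω₂ → E} {h : Ω₁ → E}
    (hw : Integrable (fun p => g p - h p.1) (P₁.prod P₂))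
    (hmean : ∀ᵐ x ∂P₁, ∫ y, g (x, y) ∂P₂ = h x) :
    ∀ᵐ x ∂P₁, ∫ y, (g (x, y) - h x) ∂P₂ = 0 := by
  filter_upwards [hmean, hw.prod_right_ae] with x hx hwx
  have hgx : Integrable (fun y => g (x, y)) P₂ := by
    simpa only [Pi.add_def, sub_add_cancel] using hwx.add (integrable_const (h x))
  rw [integral_sub hgx (integrable_const _), hx, integral_const, probReal_univ, one_smul, sub_self]

end Product

theorem stmt13_general {Ω₁ Ω₂ : Type*} [MeasurableSpace Ω₁] [MeasurableSpace Ω₂]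
    (P₁ : Measure Ω₁) (P₂ : Measure Ω₂)
    [IsProbabilityMeasure P₁] [IsProbabilityMeasure P₂]
    (dd : ℕ) (mu eta σ : ℝ) (h0 : 0 < mu * eta) (h1 : mu * eta < 1)
    (h G G' m' : Ω₁ → EuclideanSpace ℝ (Fin dd))
    (g : Ω₁ × Ω₂ → EuclideanSpace ℝ (Fin dd))
    (hhm : Measurable h) (hGm : Measurable G) (hG'm : Measurable G') (hm'm : Measurable m')
    (hgm : Measurable g)
    (hunb : ∀ᵐ ω₁ ∂P₁, ∫ ω₂, g (ω₁, ω₂) ∂P₂ = h ω₁)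
    (hvar : ∫ p, ‖g p - h p.1‖ ^ 2 ∂(P₁.prod P₂) ≤ σ ^ 2)
    (hvarint : Integrable (fun p => ‖g p - h p.1‖ ^ 2) (P₁.prod P₂))
    (hint1 : Integrable (fun ω₁ => ‖m' ω₁ - G' ω₁‖ ^ 2) P₁)
    (hint2 : Integrable (fun ω₁ => ‖G ω₁ - G' ω₁‖ ^ 2) P₁)
    (hint3 : Integrable (fun ω₁ => ‖h ω₁ - G ω₁‖ ^ 2) P₁) :
    ∫ p, ‖(1 - mu * eta) • m' p.1 + (mu * eta) • g p - G p.1‖ ^ 2 ∂(P₁.prod P₂) ≤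
      (1 - mu * eta) * ∫ ω₁, ‖m' ω₁ - G' ω₁‖ ^ 2 ∂P₁
        + (2 / (mu * eta)) * ∫ ω₁, ‖G ω₁ - G' ω₁‖ ^ 2 ∂P₁
        + 2 * (mu * eta) * ∫ ω₁, ‖h ω₁ - G ω₁‖ ^ 2 ∂P₁
        + mu ^ 2 * eta ^ 2 * σ ^ 2 := by
  set c := mu * eta with hc
  have herr : MemLp (fun x => m' x - G' x) 2 P₁ :=
    (memLp_two_iff_integrable_sq_norm (by fun_prop)).2 hint1
  have hbias : MemLp (fun x => h x - G x) 2 P₁ :=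
    (memLp_two_iff_integrable_sq_norm (by fun_prop)).2 hint3
  have hdrift : MemLp (fun x => G' x - G x) 2 P₁ := by
    rw [memLp_two_iff_integrable_sq_norm (by fun_prop)]
    simpa only [norm_sub_rev] using hint2
  have hnoise : MemLp (fun p => g p - h p.1) 2 (P₁.prod P₂) := by
    rwa [memLp_two_iff_integrable_sq_norm (by fun_prop)]
  have hA : MemLp (fun x => (1 - c) • (m' x - G' x) + ((1 - c) • (G' x - G x) + c • (h x - G x)))
      2 P₁ := (herr.const_smul (1 - c)).add ((hdrift.const_smul (1 - c)).add (hbias.const_smul c))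
  have hsplit : ∀ p : Ω₁ × Ω₂, (1 - c) • m' p.1 + c • g p - G p.1 =
      (1 - c) • (m' p.1 - G' p.1) + ((1 - c) • (G' p.1 - G p.1) + c • (h p.1 - G p.1)) +
        c • (g p - h p.1) := fun p => by module
  simp_rw [hsplit, integral_norm_add_smul_sq_eq hA hnoise
    (ae_integral_sub_eq_zero (hnoise.integrable one_le_two) hunb) c]
  have hA_bound := integral_norm_momentum_error_sq_le h0 h1 herr hdrift hbias
  have hnoise_bound := mul_le_mul_of_nonneg_left hvar (sq_nonneg c)
  simp only [norm_sub_rev (G' _) (G _)] at hA_bound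
  linarith [show c ^ 2 * σ ^ 2 = mu ^ 2 * eta ^ 2 * σ ^ 2 by rw [hc]; ring]

/-- Generic momentum tracking-error recursion for
`m_t = (1−μη) m_{t−1} + μη g_t`, where `𝔼[g_t ∣ ℱ_t] = h_t` and `m_{t−1}, h_t, G_t, G_{t−1}`
are `ℱ_t`-measurable.  The `ℱ_t`-measurable quantities depend on `ω₁` and the fresh sample
generating `g_t` on `ω₂`, on the product probability space `Ω₁ × Ω₂`. -/
theorem stmt13 {Ω₁ Ω₂ : Type*} [MeasurableSpace Ω₁] [MeasurableSpace Ω₂]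
    (P₁ : Measure Ω₁) (P₂ : Measure Ω₂)
    [IsProbabilityMeasure P₁] [IsProbabilityMeasure P₂]
    (dd : ℕ) (mu eta σ Δ : ℝ) (h0 : 0 < mu * eta) (h1 : mu * eta < 1)
    (h G G' m' : Ω₁ → EuclideanSpace ℝ (Fin dd))
    (g : Ω₁ × Ω₂ → EuclideanSpace ℝ (Fin dd))
    (hhm : Measurable h) (hGm : Measurable G) (hG'm : Measurable G') (hm'm : Measurable m')
    (hgm : Measurable g)
    (hgint : Integrable g (P₁.prod P₂))
    (hunb : ∀ᵐ ω₁ ∂P₁, ∫ ω₂, g (ω₁, ω₂) ∂P₂ = h ω₁)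
    (hvar : ∫ p, ‖g p - h p.1‖ ^ 2 ∂(P₁.prod P₂) ≤ σ ^ 2)
    (hvarint : Integrable (fun p => ‖g p - h p.1‖ ^ 2) (P₁.prod P₂))
    (hΔ : ∫ ω₁, ‖G ω₁ - G' ω₁‖ ^ 2 ∂P₁ ≤ Δ ^ 2)
    (hint1 : Integrable (fun ω₁ => ‖m' ω₁ - G' ω₁‖ ^ 2) P₁)
    (hint2 : Integrable (fun ω₁ => ‖G ω₁ - G' ω₁‖ ^ 2) P₁)
    (hint3 : Integrable (fun ω₁ => ‖h ω₁ - G ω₁‖ ^ 2) P₁) :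
    ∫ p, ‖(1 - mu * eta) • m' p.1 + (mu * eta) • g p - G p.1‖ ^ 2 ∂(P₁.prod P₂) ≤
      (1 - mu * eta) * ∫ ω₁, ‖m' ω₁ - G' ω₁‖ ^ 2 ∂P₁
        + (2 / (mu * eta)) * ∫ ω₁, ‖G ω₁ - G' ω₁‖ ^ 2 ∂P₁
        + 2 * (mu * eta) * ∫ ω₁, ‖h ω₁ - G ω₁‖ ^ 2 ∂P₁
        + mu ^ 2 * eta ^ 2 * σ ^ 2 :=
  stmt13_general P₁ P₂ dd mu eta σ h0 h1 h G G' m' g hhm hGm hG'm hm'm hgm hunb hvar hvarint hint1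
    hint2 hint3
end

section
/- Let $m_t$ evolve by the STORM variance-reduced recursion $m_t = (1-\mu\eta^2)(m_{t-1} - g_{t-1}^{\xi_t}) + g_t^{\xi_t}$ with $\mu\eta^2\in(0,1)$, where $g_{t-1}^{\xi_t}, g_t^{\xi_t}$ are stochastic gradients sampled with the same randomness $\xi_t$ satisfying $\mathbb{E}_{\xi_t}[g_{t-1}^{\xi_t}] = h_{t-1}$, $\mathbb{E}_{\xi_t}[g_t^{\xi_t}] = h_t$, with $m_{t-1}, h_{t-1}, h_t$ independent of $\xi_t$, and $\mathbb{E}\|g_{t-1}^{\xi_t} - h_{t-1}\|^2 \le \sigma^2$. Then $\mathbb{E}\|m_t - h_t\|^2 \le (1-\mu\eta^2)\,\mathbb{E}\|m_{t-1}-h_{t-1}\|^2 + 2\,\mathbb{E}\|g_t^{\xi_t} - g_{t-1}^{\xi_t}\|^2 + 2\mu^2\eta^4\sigma^2$. -/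
/-!
Write `a = 1 - μη²`, `V = g' - h'` and `S = (g - g') - (h - h')`. The new error is
`a • (m' - h') + R` with `R = S + μη² • V`, and `R` has mean zero in the fresh sample while
`m' - h'` does not depend on it, so the cross term vanishes:
`𝔼‖m_t - h_t‖² = a² 𝔼‖m' - h'‖² + 𝔼‖R‖²`. Then `‖R‖² ≤ 2‖S‖² + 2μ²η⁴‖V‖²`, and
`𝔼‖S‖² ≤ 𝔼‖g - g'‖²` since `S` is `g - g'` minus its conditional mean. Finally `a² ≤ a`.
-/

open MeasureTheory Filter

section NormSq

variable {α E : Type*} [SeminormedAddCommGroup E] {m : MeasurableSpace α} {μ : Measure α}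

theorem norm_add_sq_le_two_mul (u v : E) : ‖u + v‖ ^ 2 ≤ 2 * (‖u‖ ^ 2 + ‖v‖ ^ 2) :=
  (pow_le_pow_left₀ (norm_nonneg _) (norm_add_le u v) 2).trans add_sq_le

theorem norm_smul_sq [NormedSpace ℝ E] (c : ℝ) (v : E) :
    ‖c • v‖ ^ 2 = c ^ 2 * ‖v‖ ^ 2 := by
  rw [norm_smul, mul_pow, Real.norm_eq_abs, sq_abs]

theorem MeasureTheory.Integrable.norm_sq_of_add {f g : α → E}
    (hfg : Integrable (fun x => ‖f x + g x‖ ^ 2) μ) (hg : Integrable (fun x => ‖g x‖ ^ 2) μ)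
    (hf : AEStronglyMeasurable f μ) :
    Integrable (fun x => ‖f x‖ ^ 2) μ := by
  refine ((hfg.add hg).const_mul 2).mono' (hf.norm.pow 2) (Eventually.of_forall fun x => ?_)
  rw [Real.norm_of_nonneg (by positivity)]
  simpa using norm_add_sq_le_two_mul (f x + g x) (-g x)

theorem integral_norm_add_sq_le_s14 {f g : α → E} (hf : Integrable (fun x => ‖f x‖ ^ 2) μ)
    (hg : Integrable (fun x => ‖g x‖ ^ 2) μ) (hfg : Integrable (fun x => ‖f x + g x‖ ^ 2) μ) :
    ∫ x, ‖f x + g x‖ ^ 2 ∂μ ≤ 2 * (∫ x, ‖f x‖ ^ 2 ∂μ + ∫ x, ‖g x‖ ^ 2 ∂μ) := by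
  rw [← integral_add hf hg, ← integral_const_mul]
  exact integral_mono hfg ((hf.add hg).const_mul 2) fun x => norm_add_sq_le_two_mul _ _

end NormSq

section SecondMoment

variable {β E : Type*} [NormedAddCommGroup E] [InnerProductSpace ℝ E] [CompleteSpace E]
  {m : MeasurableSpace β} {ν : Measure β} [IsProbabilityMeasure ν] {Z : β → E}

theorem integral_norm_add_const_sq (hZ : Integrable Z ν)
    (hZ2 : Integrable (fun y => ‖Z y‖ ^ 2) ν) (c : E) :
    ∫ y, ‖Z y + c‖ ^ 2 ∂ν = ∫ y, ‖Z y‖ ^ 2 ∂ν + 2 * inner ℝ (∫ y, Z y ∂ν) c + ‖c‖ ^ 2 := by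
  have hinner : Integrable (fun y => 2 * inner ℝ (Z y) c) ν := (hZ.inner_const c).const_mul 2
  simp_rw [norm_add_sq_real]
  have hsum : Integrable (fun y => ‖Z y‖ ^ 2 + 2 * inner ℝ (Z y) c) ν := hZ2.add hinner
  rw [integral_add hsum (integrable_const _), integral_add hZ2 hinner,
    integral_const_mul, integral_const, probReal_univ, one_smul]
  simp_rw [real_inner_comm c]
  rw [integral_inner hZ c]

theorem integral_norm_add_const_sq_of_integral_eq_zero (hZ : Integrable Z ν)
    (hZ2 : Integrable (fun y => ‖Z y‖ ^ 2) ν) (hZ0 : ∫ y, Z y ∂ν = 0) (c : E) :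
    ∫ y, ‖Z y + c‖ ^ 2 ∂ν = ∫ y, ‖Z y‖ ^ 2 ∂ν + ‖c‖ ^ 2 := by
  rw [integral_norm_add_const_sq hZ hZ2, hZ0, inner_zero_left, mul_zero, add_zero]

theorem integral_norm_sub_integral_sq_le_s14 (hZ : Integrable Z ν)
    (hZ2 : Integrable (fun y => ‖Z y‖ ^ 2) ν) :
    ∫ y, ‖Z y - ∫ z, Z z ∂ν‖ ^ 2 ∂ν ≤ ∫ y, ‖Z y‖ ^ 2 ∂ν := by
  simp_rw [sub_eq_add_neg]
  rw [integral_norm_add_const_sq hZ hZ2, inner_neg_right, real_inner_self_eq_norm_sq, norm_neg]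
  nlinarith [sq_nonneg ‖∫ z, Z z ∂ν‖]

end SecondMoment

section ConditionalMean

variable {α β E : Type*} [NormedAddCommGroup E] [NormedSpace ℝ E]
  {mα : MeasurableSpace α} {mβ : MeasurableSpace β} {μ : Measure α} {ν : Measure β}

theorem ae_integral_prod_sub_eq_zero [CompleteSpace E] [SFinite μ] [IsProbabilityMeasure ν]
    {f : α × β → E} {c : α → E} (hf : Integrable f (μ.prod ν))
    (hc : ∀ᵐ x ∂μ, ∫ y, f (x, y) ∂ν = c x) :
    ∀ᵐ x ∂μ, ∫ y, (f (x, y) - c x) ∂ν = 0 := by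
  filter_upwards [hc, hf.prod_right_ae] with x hcx hfx
  rw [integral_sub hfx (integrable_const _), hcx, integral_const, probReal_univ, one_smul,
    sub_self]

theorem ae_integral_prod_sub [SFinite μ] [SFinite ν] {f g : α × β → E} {cf cg : α → E}
    (hf : Integrable f (μ.prod ν)) (hg : Integrable g (μ.prod ν))
    (hcf : ∀ᵐ x ∂μ, ∫ y, f (x, y) ∂ν = cf x)
    (hcg : ∀ᵐ x ∂μ, ∫ y, g (x, y) ∂ν = cg x) :
    ∀ᵐ x ∂μ, ∫ y, (f (x, y) - g (x, y)) ∂ν = cf x - cg x := by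
  filter_upwards [hcf, hcg, hf.prod_right_ae, hg.prod_right_ae] with x hcfx hcgx hfx hgx
  rw [integral_sub hfx hgx, hcfx, hcgx]

end ConditionalMean

section Product

variable {α β E : Type*} [NormedAddCommGroup E] [InnerProductSpace ℝ E] [CompleteSpace E]
  {mα : MeasurableSpace α} {mβ : MeasurableSpace β} {μ : Measure α} {ν : Measure β}
  [SFinite μ] [IsProbabilityMeasure ν]

theorem integral_prod_norm_add_sq_of_ae_integral_eq_zero {R : α × β → E} (X : α → E)
    (hR : Integrable R (μ.prod ν)) (hR2 : Integrable (fun p => ‖R p‖ ^ 2) (μ.prod ν))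
    (hX2 : Integrable (fun x => ‖X x‖ ^ 2) μ)
    (hRX : Integrable (fun p => ‖R p + X p.1‖ ^ 2) (μ.prod ν))
    (hR0 : ∀ᵐ x ∂μ, ∫ y, R (x, y) ∂ν = 0) :
    ∫ p, ‖R p + X p.1‖ ^ 2 ∂(μ.prod ν) = ∫ p, ‖R p‖ ^ 2 ∂(μ.prod ν) + ∫ x, ‖X x‖ ^ 2 ∂μ := by
  have hfiber : ∀ᵐ x ∂μ, ∫ y, ‖R (x, y) + X x‖ ^ 2 ∂ν = ∫ y, ‖R (x, y)‖ ^ 2 ∂ν + ‖X x‖ ^ 2 := by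
    filter_upwards [hR0, hR.prod_right_ae, hR2.prod_right_ae] with x hRx hR1x hR2x
    exact integral_norm_add_const_sq_of_integral_eq_zero hR1x hR2x hRx (X x)
  rw [integral_prod _ hRX, integral_congr_ae hfiber, integral_add hR2.integral_prod_left hX2,
    ← integral_prod _ hR2]

theorem integral_prod_norm_sub_sq_le {Z : α × β → E} {c : α → E}
    (hZ : Integrable Z (μ.prod ν)) (hZ2 : Integrable (fun p => ‖Z p‖ ^ 2) (μ.prod ν))
    (hZc2 : Integrable (fun p => ‖Z p - c p.1‖ ^ 2) (μ.prod ν))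
    (hc : ∀ᵐ x ∂μ, ∫ y, Z (x, y) ∂ν = c x) :
    ∫ p, ‖Z p - c p.1‖ ^ 2 ∂(μ.prod ν) ≤ ∫ p, ‖Z p‖ ^ 2 ∂(μ.prod ν) := by
  rw [integral_prod _ hZc2, integral_prod _ hZ2]
  refine integral_mono_ae hZc2.integral_prod_left hZ2.integral_prod_left ?_
  filter_upwards [hc, hZ.prod_right_ae, hZ2.prod_right_ae] with x hcx hZx hZ2x
  rw [← hcx]
  exact integral_norm_sub_integral_sq_le_s14 hZx hZ2x

theorem integral_prod_norm_sub_add_smul_add_sq_le {Z V : α × β → E} {c : α → E} (b : ℝ)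
    (X : α → E) (hZ : Integrable Z (μ.prod ν)) (hZ2 : Integrable (fun p => ‖Z p‖ ^ 2) (μ.prod ν))
    (hc : ∀ᵐ x ∂μ, ∫ y, Z (x, y) ∂ν = c x) (hV : Integrable V (μ.prod ν))
    (hV2 : Integrable (fun p => ‖V p‖ ^ 2) (μ.prod ν)) (hV0 : ∀ᵐ x ∂μ, ∫ y, V (x, y) ∂ν = 0)
    (hX2 : Integrable (fun x => ‖X x‖ ^ 2) μ)
    (hRX : Integrable (fun p => ‖Z p - c p.1 + b • V p + X p.1‖ ^ 2) (μ.prod ν)) :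
    ∫ p, ‖Z p - c p.1 + b • V p + X p.1‖ ^ 2 ∂(μ.prod ν) ≤
      2 * ∫ p, ‖Z p‖ ^ 2 ∂(μ.prod ν) + 2 * b ^ 2 * ∫ p, ‖V p‖ ^ 2 ∂(μ.prod ν)
        + ∫ x, ‖X x‖ ^ 2 ∂μ := by
  have hS : Integrable (fun p => Z p - c p.1) (μ.prod ν) :=
    hZ.sub ((hZ.integral_prod_left.congr hc).comp_fst ν)
  have hbV : Integrable (fun p => b • V p) (μ.prod ν) := hV.smul b
  have hR : Integrable (fun p => Z p - c p.1 + b • V p) (μ.prod ν) := hS.add hbV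
  have hR0 : ∀ᵐ x ∂μ, ∫ y, (Z (x, y) - c x + b • V (x, y)) ∂ν = 0 := by
    filter_upwards [ae_integral_prod_sub_eq_zero hZ hc, hV0, hS.prod_right_ae,
      hbV.prod_right_ae] with x hSx hVx hiSx hibVx
    rw [integral_add hiSx hibVx, integral_smul, hSx, hVx, smul_zero, add_zero]
  have hbV2 : Integrable (fun p => ‖b • V p‖ ^ 2) (μ.prod ν) := by
    simpa only [norm_smul_sq] using hV2.const_mul (b ^ 2)
  have hR2 := hRX.norm_sq_of_add (hX2.comp_fst ν) hR.aestronglyMeasurable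
  have hS2 := hR2.norm_sq_of_add hbV2 hS.aestronglyMeasurable
  have hsplit := integral_norm_add_sq_le_s14 hS2 hbV2 hR2
  have hvariance := integral_prod_norm_sub_sq_le hZ hZ2 hS2 hc
  simp_rw [norm_smul_sq, integral_const_mul] at hsplit
  rw [integral_prod_norm_add_sq_of_ae_integral_eq_zero X hR hR2 hX2 hRX hR0]
  linarith

end Product

/-- Independence of `m_{t−1}, h_{t−1}, h_t` from the fresh sample `ξ_t` is modelled by the
product probability space `Ω₁ × Ω₂` (past on `ω₁`, sample on `ω₂`). -/
theorem stmt14_general {Ω₁ Ω₂ : Type*} [MeasurableSpace Ω₁] [MeasurableSpace Ω₂]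
    (P₁ : Measure Ω₁) (P₂ : Measure Ω₂)
    [IsProbabilityMeasure P₁] [IsProbabilityMeasure P₂]
    (dd : ℕ) (mu eta σ : ℝ) (h0 : 0 < mu * eta ^ 2) (h1 : mu * eta ^ 2 < 1)
    (m' h' h : Ω₁ → EuclideanSpace ℝ (Fin dd))
    (g' g : Ω₁ × Ω₂ → EuclideanSpace ℝ (Fin dd))
    (hg'int : Integrable g' (P₁.prod P₂)) (hgint : Integrable g (P₁.prod P₂))
    (hunb' : ∀ᵐ ω₁ ∂P₁, ∫ ω₂, g' (ω₁, ω₂) ∂P₂ = h' ω₁)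
    (hunb : ∀ᵐ ω₁ ∂P₁, ∫ ω₂, g (ω₁, ω₂) ∂P₂ = h ω₁)
    (hvar : ∫ p, ‖g' p - h' p.1‖ ^ 2 ∂(P₁.prod P₂) ≤ σ ^ 2)
    (hvarint : Integrable (fun p => ‖g' p - h' p.1‖ ^ 2) (P₁.prod P₂))
    (hint1 : Integrable (fun ω₁ => ‖m' ω₁ - h' ω₁‖ ^ 2) P₁)
    (hint2 : Integrable (fun p : Ω₁ × Ω₂ => ‖g p - g' p‖ ^ 2) (P₁.prod P₂))
    (hint3 : Integrable
      (fun p : Ω₁ × Ω₂ =>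
        ‖(1 - mu * eta ^ 2) • (m' p.1 - g' p) + g p - h p.1‖ ^ 2) (P₁.prod P₂)) :
    ∫ p, ‖(1 - mu * eta ^ 2) • (m' p.1 - g' p) + g p - h p.1‖ ^ 2 ∂(P₁.prod P₂) ≤
      (1 - mu * eta ^ 2) * ∫ ω₁, ‖m' ω₁ - h' ω₁‖ ^ 2 ∂P₁
        + 2 * ∫ p, ‖g p - g' p‖ ^ 2 ∂(P₁.prod P₂)
        + 2 * mu ^ 2 * eta ^ 4 * σ ^ 2 := by
  have hdecomp : ∀ p : Ω₁ × Ω₂, (1 - mu * eta ^ 2) • (m' p.1 - g' p) + g p - h p.1 =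
      (g p - g' p) - (h p.1 - h' p.1) + (mu * eta ^ 2) • (g' p - h' p.1)
        + (1 - mu * eta ^ 2) • (m' p.1 - h' p.1) := fun p => by module
  simp_rw [hdecomp] at hint3 ⊢
  have haX2 : Integrable (fun ω₁ => ‖(1 - mu * eta ^ 2) • (m' ω₁ - h' ω₁)‖ ^ 2) P₁ := by
    simpa only [norm_smul_sq] using hint1.const_mul ((1 - mu * eta ^ 2) ^ 2)
  have hV : Integrable (fun p => g' p - h' p.1) (P₁.prod P₂) :=
    hg'int.sub ((hg'int.integral_prod_left.congr hunb').comp_fst P₂)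
  refine (integral_prod_norm_sub_add_smul_add_sq_le (Z := fun p => g p - g' p) (mu * eta ^ 2)
    _ (hgint.sub hg'int) hint2 (ae_integral_prod_sub hgint hg'int hunb hunb') hV hvarint
    (ae_integral_prod_sub_eq_zero hg'int hunb') haX2 hint3).trans ?_
  simp_rw [norm_smul_sq, integral_const_mul]
  have ha : (1 - mu * eta ^ 2) ^ 2 ≤ 1 - mu * eta ^ 2 := by nlinarith
  calc _ ≤ 2 * ∫ p, ‖g p - g' p‖ ^ 2 ∂(P₁.prod P₂) + 2 * (mu * eta ^ 2) ^ 2 * σ ^ 2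
        + (1 - mu * eta ^ 2) * ∫ ω₁, ‖m' ω₁ - h' ω₁‖ ^ 2 ∂P₁ := by gcongr
    _ = _ := by ring

/-- Per-iteration error recursion of the STORM estimator
`m_t = (1−μη²)(m_{t−1} − g_{t−1}^{ξ_t}) + g_t^{ξ_t}`:
`𝔼‖m_t − h_t‖² ≤ (1−μη²)𝔼‖m_{t−1} − h_{t−1}‖² + 2𝔼‖g_t^{ξ_t} − g_{t−1}^{ξ_t}‖² + 2μ²η⁴σ²`.
Independence of `m_{t−1}, h_{t−1}, h_t` from the fresh sample `ξ_t` is modelled by the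
product probability space `Ω₁ × Ω₂` (past on `ω₁`, sample on `ω₂`). -/
theorem stmt14 {Ω₁ Ω₂ : Type*} [MeasurableSpace Ω₁] [MeasurableSpace Ω₂]
    (P₁ : Measure Ω₁) (P₂ : Measure Ω₂)
    [IsProbabilityMeasure P₁] [IsProbabilityMeasure P₂]
    (dd : ℕ) (mu eta σ : ℝ) (h0 : 0 < mu * eta ^ 2) (h1 : mu * eta ^ 2 < 1)
    (m' h' h : Ω₁ → EuclideanSpace ℝ (Fin dd))
    (g' g : Ω₁ × Ω₂ → EuclideanSpace ℝ (Fin dd))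
    (hm'm : Measurable m') (hh'm : Measurable h') (hhm : Measurable h)
    (hg'm : Measurable g') (hgm : Measurable g)
    (hg'int : Integrable g' (P₁.prod P₂)) (hgint : Integrable g (P₁.prod P₂))
    (hunb' : ∀ᵐ ω₁ ∂P₁, ∫ ω₂, g' (ω₁, ω₂) ∂P₂ = h' ω₁)
    (hunb : ∀ᵐ ω₁ ∂P₁, ∫ ω₂, g (ω₁, ω₂) ∂P₂ = h ω₁)
    (hvar : ∫ p, ‖g' p - h' p.1‖ ^ 2 ∂(P₁.prod P₂) ≤ σ ^ 2)
    (hvarint : Integrable (fun p => ‖g' p - h' p.1‖ ^ 2) (P₁.prod P₂))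
    (hint1 : Integrable (fun ω₁ => ‖m' ω₁ - h' ω₁‖ ^ 2) P₁)
    (hint2 : Integrable (fun p : Ω₁ × Ω₂ => ‖g p - g' p‖ ^ 2) (P₁.prod P₂))
    (hint3 : Integrable
      (fun p : Ω₁ × Ω₂ =>
        ‖(1 - mu * eta ^ 2) • (m' p.1 - g' p) + g p - h p.1‖ ^ 2) (P₁.prod P₂)) :
    ∫ p, ‖(1 - mu * eta ^ 2) • (m' p.1 - g' p) + g p - h p.1‖ ^ 2 ∂(P₁.prod P₂) ≤
      (1 - mu * eta ^ 2) * ∫ ω₁, ‖m' ω₁ - h' ω₁‖ ^ 2 ∂P₁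
        + 2 * ∫ p, ‖g p - g' p‖ ^ 2 ∂(P₁.prod P₂)
        + 2 * mu ^ 2 * eta ^ 4 * σ ^ 2 :=
  stmt14_general P₁ P₂ dd mu eta σ h0 h1 m' h' h g' g hg'int hgint hunb' hunb hvar hvarint hint1
    hint2 hint3
end

section
/- Let $W\in\mathbb{R}^{N\times N}$ be symmetric doubly stochastic with second largest eigenvalue modulus $\lambda<1$, and consider the gradient-tracking recursion $Y_{t+1} = Y_t W + M_{t+1} - M_t$ (column-wise: $y_{n,t+1} = \sum_{n'} w_{nn'} y_{n',t} + m_{n,t+1} - m_{n,t}$). Then $\|Y_{t+1} - \bar{Y}_{t+1}\|_F^2 \le \lambda\,\|Y_t - \bar{Y}_t\|_F^2 + \frac{1}{1-\lambda}\,\|M_{t+1}-M_t\|_F^2$. -/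
/-!
With `Z = Y - Ȳ` and `D = M' - M`, double stochasticity of `W` lets averaging commute with `W`,
so the new consensus error is `Z W + (D - D̄)`. Each row of `Z` is orthogonal to `𝟙`, the
eigenvector of `W` for the eigenvalue `1`; in an orthonormal eigenbasis of `W` it therefore only
sees eigenvalues of modulus at most `λ`, whence `‖Z W‖_F ≤ λ ‖Z‖_F`. Subtracting the row mean is
the orthogonal projection onto `𝟙ᗮ`, so `‖D - D̄‖_F ≤ ‖D‖_F`. The triangle inequality and
convexity of the square, `(λ a + b)² = (λ a + (1 - λ) (b / (1 - λ)))² ≤ λ a² + b² / (1 - λ)`,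
finish the proof.
-/

open Finset

/-- Frobenius norm of a real matrix. -/
noncomputable def frobNorm {m n : Type*} [Fintype m] [Fintype n] (X : Matrix m n ℝ) : ℝ :=
  Real.sqrt (∑ i, ∑ j, (X i j) ^ 2)

/-- Column-averaging: `X̄ = X · (1/N) 𝟙𝟙ᵀ`. -/
noncomputable def colAvg {dd N : ℕ} (X : Matrix (Fin dd) (Fin N) ℝ) : Matrix (Fin dd) (Fin N) ℝ :=
  X * Matrix.of (fun _ _ => (N : ℝ)⁻¹)

open WithLp

section SpectralGap

variable {𝕜 E ι : Type*} [RCLike 𝕜] [NormedAddCommGroup E] [InnerProductSpace 𝕜 E] [Fintype ι]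
  {T : E →ₗ[𝕜] E} {b : OrthonormalBasis ι 𝕜 E} {μ : ι → ℝ}

theorem OrthonormalBasis.repr_apply_of_apply_eq_smul (hb : ∀ i, T (b i) = (μ i : 𝕜) • b i)
    (x : E) (i : ι) : b.repr (T x) i = μ i * b.repr x i := by
  conv_lhs => rw [← b.sum_repr x]
  classical
  simp [hb, smul_smul, OrthonormalBasis.repr_self, Pi.single_apply, mul_comm]

theorem OrthonormalBasis.norm_apply_sq_of_apply_eq_smul (hb : ∀ i, T (b i) = (μ i : 𝕜) • b i)
    (x : E) : ‖T x‖ ^ 2 = ∑ i, μ i ^ 2 * ‖b.repr x i‖ ^ 2 := by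
  rw [← b.repr.norm_map, EuclideanSpace.norm_sq_eq]
  simp [b.repr_apply_of_apply_eq_smul hb, norm_mul, mul_pow]

theorem OrthonormalBasis.repr_eq_zero_of_apply_eq_self (hb : ∀ i, T (b i) = (μ i : 𝕜) • b i)
    {v : E} (hv : T v = v) {i : ι} (hi : μ i ≠ 1) : b.repr v i = 0 := by
  have h := b.repr_apply_of_apply_eq_smul hb v i
  rw [hv] at h
  have : ((1 : 𝕜) - μ i) * b.repr v i = 0 := by linear_combination h
  exact (mul_eq_zero.1 this).resolve_left (sub_ne_zero.2 (by exact_mod_cast hi.symm))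

theorem OrthonormalBasis.norm_apply_sq_le_of_inner_eq_zero
    (hb : ∀ i, T (b i) = (μ i : 𝕜) • b i) {v : E} (hv : T v = v) (hv0 : v ≠ 0)
    {i₀ : ι} {lam : ℝ} (hlam : lam < 1) (hμ : ∀ i, i ≠ i₀ → |μ i| ≤ lam)
    {x : E} (hx : inner 𝕜 v x = 0) : ‖T x‖ ^ 2 ≤ lam ^ 2 * ‖x‖ ^ 2 := by
  have hv_off : ∀ i, i ≠ i₀ → b.repr v i = 0 := fun i hi =>
    b.repr_eq_zero_of_apply_eq_self hb hv ((le_abs_self _).trans (hμ i hi) |>.trans_lt hlam).ne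
  have hv_on : b.repr v i₀ ≠ 0 := by
    refine fun h => hv0 (b.repr.map_eq_zero_iff.1 ?_)
    ext i
    by_cases hi : i = i₀
    · simpa [hi] using h
    · simpa using hv_off i hi
  have hx_on : b.repr x i₀ = 0 := by
    rw [← b.repr.inner_map_map, PiLp.inner_apply,
      Finset.sum_eq_single i₀ (fun i _ hi => by simp [hv_off i hi]) (by simp)] at hx
    simpa [hv_on] using hx
  rw [b.norm_apply_sq_of_apply_eq_smul hb, ← b.repr.norm_map, EuclideanSpace.norm_sq_eq,
    Finset.mul_sum]
  refine Finset.sum_le_sum fun i _ => ?_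
  by_cases hi : i = i₀
  · simp [hi, hx_on]
  · have := abs_le.1 (hμ i hi)
    exact mul_le_mul_of_nonneg_right (sq_le_sq' this.1 this.2) (by positivity)

end SpectralGap

theorem Submodule.starProjection_orthogonal_singleton {𝕜 E : Type*} [RCLike 𝕜]
    [NormedAddCommGroup E] [InnerProductSpace 𝕜 E] (v w : E) :
    (𝕜 ∙ v)ᗮ.starProjection w = w - (inner 𝕜 v w / ((‖v‖ ^ 2 : ℝ) : 𝕜)) • v := by
  rw [starProjection_orthogonal_val, starProjection_singleton]

section FrobeniusNorm

variable {m n : Type*} [Fintype m] [Fintype n]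

theorem frobNorm_nonneg (X : Matrix m n ℝ) : 0 ≤ frobNorm X :=
  Real.sqrt_nonneg _

theorem frobNorm_sq_eq_sum_norm_row (X : Matrix m n ℝ) :
    frobNorm X ^ 2 = ∑ i, ‖(toLp 2 (X i) : EuclideanSpace ℝ n)‖ ^ 2 := by
  rw [frobNorm, Real.sq_sqrt (by positivity)]
  simp [EuclideanSpace.norm_sq_eq]

theorem frobNorm_sq_le_of_norm_row_sq_le {A B : Matrix m n ℝ} {c : ℝ}
    (h : ∀ i, ‖(toLp 2 (A i) : EuclideanSpace ℝ n)‖ ^ 2 ≤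
      c * ‖(toLp 2 (B i) : EuclideanSpace ℝ n)‖ ^ 2) :
    frobNorm A ^ 2 ≤ c * frobNorm B ^ 2 := by
  rw [frobNorm_sq_eq_sum_norm_row, frobNorm_sq_eq_sum_norm_row, Finset.mul_sum]
  exact Finset.sum_le_sum fun i _ => h i

attribute [local instance] Matrix.frobeniusNormedAddCommGroup

theorem frobNorm_eq_norm (X : Matrix m n ℝ) : frobNorm X = ‖X‖ := by
  rw [frobNorm, Matrix.frobenius_norm_def, Real.sqrt_eq_rpow]
  simp

theorem frobNorm_add_le (A B : Matrix m n ℝ) : frobNorm (A + B) ≤ frobNorm A + frobNorm B := by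
  simpa only [frobNorm_eq_norm] using norm_add_le A B

end FrobeniusNorm

theorem Matrix.mul_of_const_of_sum_row_eq_one {n α : Type*} [Fintype n] [Semiring α]
    {W : Matrix n n α} (hrow : ∀ i, ∑ j, W i j = 1) (c : α) :
    W * Matrix.of (fun _ _ => c) = Matrix.of (fun _ _ => c) := by
  ext i j
  simp [Matrix.mul_apply, ← Finset.sum_mul, hrow i]

theorem Matrix.of_const_mul_of_sum_col_eq_one {n α : Type*} [Fintype n] [Semiring α]
    {W : Matrix n n α} (hcol : ∀ j, ∑ i, W i j = 1) (c : α) :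
    Matrix.of (fun _ _ => c) * W = Matrix.of (fun _ _ => c) := by
  ext i j
  simp [Matrix.mul_apply, ← Finset.mul_sum, hcol j]

section ColumnAverage

variable {dd N : ℕ}

-- `colAvg` elaborates its product through the `CStarMatrix` instance; this restates it with
-- `Matrix`'s own product, so that the matrix-multiplication lemmas apply.
theorem colAvg_eq_mul (X : Matrix (Fin dd) (Fin N) ℝ) :
    colAvg X = X * (Matrix.of fun _ _ => (N : ℝ)⁻¹ : Matrix (Fin N) (Fin N) ℝ) :=
  rfl

theorem colAvg_apply (X : Matrix (Fin dd) (Fin N) ℝ) (i : Fin dd) (j : Fin N) :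
    colAvg X i j = (∑ k, X i k) / N := by
  simp [colAvg_eq_mul, Matrix.mul_apply, ← Finset.sum_mul, div_eq_mul_inv]

theorem toLp_sub_colAvg_apply (X : Matrix (Fin dd) (Fin N) ℝ) (i : Fin dd) :
    (toLp 2 ((X - colAvg X) i) : EuclideanSpace ℝ (Fin N)) =
      (ℝ ∙ (toLp 2 1 : EuclideanSpace ℝ (Fin N)))ᗮ.starProjection (toLp 2 (X i)) := by
  rw [Submodule.starProjection_orthogonal_singleton]
  ext j
  simp [colAvg_apply, PiLp.inner_apply, EuclideanSpace.norm_sq_eq]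

theorem frobNorm_sub_colAvg_le (X : Matrix (Fin dd) (Fin N) ℝ) :
    frobNorm (X - colAvg X) ≤ frobNorm X := by
  refine (sq_le_sq₀ (frobNorm_nonneg _) (frobNorm_nonneg _)).1 ?_
  simpa only [one_mul] using frobNorm_sq_le_of_norm_row_sq_le (c := 1) fun i => by
    rw [one_mul, toLp_sub_colAvg_apply]
    exact pow_le_pow_left₀ (norm_nonneg _) (Submodule.norm_starProjection_apply_le _ _) 2

variable {W : Matrix (Fin N) (Fin N) ℝ}

theorem colAvg_mul_of_sum_row_eq_one (hrow : ∀ i, ∑ j, W i j = 1)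
    (Y : Matrix (Fin dd) (Fin N) ℝ) : colAvg (Y * W) = colAvg Y := by
  rw [colAvg_eq_mul, Matrix.mul_assoc, Matrix.mul_of_const_of_sum_row_eq_one hrow, colAvg_eq_mul]

theorem colAvg_mul_of_sum_col_eq_one (hcol : ∀ j, ∑ i, W i j = 1)
    (Y : Matrix (Fin dd) (Fin N) ℝ) : colAvg Y * W = colAvg Y := by
  rw [colAvg_eq_mul, Matrix.mul_assoc, Matrix.of_const_mul_of_sum_col_eq_one hcol]

theorem mul_add_sub_colAvg (hrow : ∀ i, ∑ j, W i j = 1) (hcol : ∀ j, ∑ i, W i j = 1)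
    (Y D : Matrix (Fin dd) (Fin N) ℝ) :
    (Y * W + D) - colAvg (Y * W + D) = (Y - colAvg Y) * W + (D - colAvg D) := by
  have hadd : colAvg (Y * W + D) = colAvg (Y * W) + colAvg D := by
    simp only [colAvg_eq_mul, Matrix.add_mul]
  rw [hadd, colAvg_mul_of_sum_row_eq_one hrow, Matrix.sub_mul, colAvg_mul_of_sum_col_eq_one hcol]
  abel

theorem frobNorm_sub_colAvg_mul_sq_le (hW : W.IsHermitian) (hrow : ∀ i, ∑ j, W i j = 1)
    {i₀ : Fin N} {lam : ℝ} (hlam : lam < 1) (heig : ∀ i, i ≠ i₀ → |hW.eigenvalues i| ≤ lam)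
    (Y : Matrix (Fin dd) (Fin N) ℝ) :
    frobNorm ((Y - colAvg Y) * W) ^ 2 ≤ lam ^ 2 * frobNorm (Y - colAvg Y) ^ 2 := by
  set T := Matrix.toEuclideanLin W
  set ones : EuclideanSpace ℝ (Fin N) := toLp 2 1
  have hb : ∀ i, T (hW.eigenvectorBasis i) = hW.eigenvalues i • hW.eigenvectorBasis i := by
    intro i
    ext j
    simpa [T] using congrFun (hW.mulVec_eigenvectorBasis i) j
  have hTones : T ones = ones := by
    ext j
    simp [T, ones, Matrix.mulVec, dotProduct, hrow j]
  have hones : ones ≠ 0 := fun h => by simpa [ones] using congrArg (· i₀) h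
  refine frobNorm_sq_le_of_norm_row_sq_le fun i => ?_
  have hrowT : (toLp 2 (((Y - colAvg Y) * W) i) : EuclideanSpace ℝ (Fin N)) =
      T (toLp 2 ((Y - colAvg Y) i)) := by
    ext j
    simp only [T, Matrix.toLpLin_apply, PiLp.toLp_apply, Matrix.mul_apply, Matrix.mulVec,
      dotProduct]
    exact Finset.sum_congr rfl fun k _ => by rw [mul_comm, ← hW.apply j k, star_trivial]
  have horth : inner ℝ ones (toLp 2 ((Y - colAvg Y) i)) = 0 := by
    rw [toLp_sub_colAvg_apply]
    exact Submodule.inner_right_of_mem_orthogonal (Submodule.mem_span_singleton_self _)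
      (Submodule.starProjection_apply_mem _ _)
  rw [hrowT]
  exact hW.eigenvectorBasis.norm_apply_sq_le_of_inner_eq_zero hb hTones hones hlam heig horth

end ColumnAverage

theorem mul_add_sq_le_of_lt_one {t a b : ℝ} (ht0 : 0 ≤ t) (ht1 : t < 1) :
    (t * a + b) ^ 2 ≤ t * a ^ 2 + 1 / (1 - t) * b ^ 2 := by
  have h1t : 0 < 1 - t := sub_pos.2 ht1
  have hgap : t * a ^ 2 + 1 / (1 - t) * b ^ 2 - (t * a + b) ^ 2
      = t * ((1 - t) * a - b) ^ 2 / (1 - t) := by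
    field_simp
    ring
  have : 0 ≤ t * ((1 - t) * a - b) ^ 2 / (1 - t) := by positivity
  linarith

theorem stmt15_general (N : ℕ) (W : Matrix (Fin N) (Fin N) ℝ)
    (hHerm : W.IsHermitian)
    (hrow : ∀ i, ∑ j, W i j = 1)
    (hcol : ∀ j, ∑ i, W i j = 1)
    (lam : ℝ) (hlam0 : 0 ≤ lam) (hlam1 : lam < 1)
    (i₀ : Fin N)
    (heig : ∀ i, i ≠ i₀ → |hHerm.eigenvalues i| ≤ lam)
    (dd : ℕ) (Y M M' : Matrix (Fin dd) (Fin N) ℝ) :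
    frobNorm ((Y * W + M' - M) - colAvg (Y * W + M' - M)) ^ 2 ≤
      lam * frobNorm (Y - colAvg Y) ^ 2 + (1 / (1 - lam)) * frobNorm (M' - M) ^ 2 := by
  have hsplit := mul_add_sub_colAvg hrow hcol Y (M' - M)
  rw [← add_sub_assoc] at hsplit
  have hcontract : frobNorm ((Y - colAvg Y) * W) ≤ lam * frobNorm (Y - colAvg Y) := by
    refine (sq_le_sq₀ (frobNorm_nonneg _) (mul_nonneg hlam0 (frobNorm_nonneg _))).1 ?_
    simpa only [mul_pow] using frobNorm_sub_colAvg_mul_sq_le hHerm hrow hlam1 heig Y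
  calc _ ≤ (lam * frobNorm (Y - colAvg Y) + frobNorm (M' - M)) ^ 2 := by
        rw [hsplit]
        gcongr
        · exact frobNorm_nonneg _
        · exact (frobNorm_add_le _ _).trans (add_le_add hcontract (frobNorm_sub_colAvg_le _))
    _ ≤ _ := mul_add_sq_le_of_lt_one hlam0 hlam1

/-- Consensus-error recursion of the gradient-tracking update
`Y⁺ = YW + M⁺ − M`:
`‖Y⁺ − Ȳ⁺‖_F² ≤ λ‖Y − Ȳ‖_F² + (1/(1−λ))‖M⁺ − M‖_F²`. -/
theorem stmt15 (N : ℕ) (hN : 0 < N) (W : Matrix (Fin N) (Fin N) ℝ)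
    (hHerm : W.IsHermitian)
    (hnonneg : ∀ i j, 0 ≤ W i j)
    (hrow : ∀ i, ∑ j, W i j = 1)
    (hcol : ∀ j, ∑ i, W i j = 1)
    (lam : ℝ) (hlam0 : 0 ≤ lam) (hlam1 : lam < 1)
    (i₀ : Fin N) (heig1 : hHerm.eigenvalues i₀ = 1)
    (heig : ∀ i, i ≠ i₀ → |hHerm.eigenvalues i| ≤ lam)
    (dd : ℕ) (Y M M' : Matrix (Fin dd) (Fin N) ℝ) :
    frobNorm ((Y * W + M' - M) - colAvg (Y * W + M' - M)) ^ 2 ≤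
      lam * frobNorm (Y - colAvg Y) ^ 2 + (1 / (1 - lam)) * frobNorm (M' - M) ^ 2 :=
  stmt15_general N W hHerm hrow hcol lam hlam0 hlam1 i₀ heig dd Y M M'
end
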